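/- arXiv:cs/0609076 — 2 statements merged into one kernel-verified Lean document; each statement's English description precedes it below -/
import Mathlib

section
/- For all integers n ≥ 1 and 1 ≤ j ≤ n, the sum over all non-ascending tuples (b₁,…,b_{n-j+1}) of positive integers with b₁ + ⋯ + b_{n-j+1} = n of n·(n-j)!·(j-1)! / f(b₁,…,b_{n-j+1}) equals n(n-1)⋯(n-j+2), the falling factorial with j-1 factors. -/
open scoped Classical

/-- `f(b₁,…,b_m) = ∏_{k ≥ 1} n_k!` where `n_k` is the multiplicity of `k`. -/
def fMult (m : Multiset ℕ) : ℕ := m.toFinset.prod fun k => (m.count k).factorial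

/-!
Let `m = n - j + 1`. Group the compositions of `n` into `m` positive parts by their decreasing
rearrangement `b`: the class of `b` is an orbit of `Perm (Fin m)` acting by precomposition, with
stabilizer of order `f(b)`, so it has `m! / f(b)` elements, and the sum of `m! / f(b)` is the
number `C(n-1, j-1)` of such compositions. Finally
`n (n-j)! (j-1)! C(n-1, j-1) = n! = descFactorial n (j-1) · m!`.
-/

open Finset Nat Equiv

section Rearrangement

variable {α : Type*} [Fintype α]

theorem count_map_univ_val (b : α → ℕ) (i : ℕ) :
    (univ.val.map b).count i = Fintype.card {a // b a = i} := by
  simp [Multiset.count_map, Fintype.card_subtype, eq_comm, ← filter_val]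

theorem fMult_map_univ_eq_card_stabilizer (b : α → ℕ) :
    fMult (univ.val.map b) = Fintype.card {σ : Perm α // b ∘ σ = b} := by
  rw [DomMulAct.stabilizer_card']
  exact prod_congr rfl fun i _ ↦ by rw [count_map_univ_val]

theorem map_univ_comp_perm (b : α → ℕ) (σ : Perm α) :
    univ.val.map (b ∘ σ) = univ.val.map b := by
  rw [← Multiset.map_map, Multiset.map_univ_val_equiv]

theorem exists_perm_comp_eq_of_map_univ_eq {b c : α → ℕ}
    (h : univ.val.map c = univ.val.map b) : ∃ τ : Perm α, b ∘ τ = c := by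
  have hfiber (i : ℕ) : Fintype.card {a // c a = i} = Fintype.card {a // b a = i} := by
    rw [← count_map_univ_val, ← count_map_univ_val, h]
  exact ⟨.ofFiberEquiv fun i ↦ Fintype.equivOfCardEq (hfiber i),
    funext fun a ↦ ofFiberEquiv_map _ a⟩

theorem card_perm_comp_eq {b c : α → ℕ} (h : univ.val.map c = univ.val.map b) :
    #{σ : Perm α | b ∘ σ = c} = fMult (univ.val.map b) := by
  obtain ⟨τ, rfl⟩ := exists_perm_comp_eq_of_map_univ_eq h
  rw [fMult_map_univ_eq_card_stabilizer, Fintype.card_subtype]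
  refine card_nbij' (· * τ⁻¹) (· * τ) (fun σ hσ ↦ ?_) (fun σ hσ ↦ ?_) (fun σ _ ↦ by simp)
    (fun σ _ ↦ by simp) <;> simp only [coe_filter, mem_univ, true_and, Set.mem_ofPred_eq] at hσ ⊢
  · rw [Perm.coe_mul, ← Function.comp_assoc, hσ]; ext; simp
  · rw [Perm.coe_mul, ← Function.comp_assoc, hσ]

theorem card_filter_map_univ_eq_mul_fMult {S : Finset (α → ℕ)}
    (hS : ∀ c ∈ S, ∀ σ : Perm α, c ∘ σ ∈ S) {b : α → ℕ} (hb : b ∈ S) :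
    #{c ∈ S | univ.val.map c = univ.val.map b} * fMult (univ.val.map b) = (Fintype.card α)! := by
  have hmaps : ∀ σ ∈ (univ : Finset (Perm α)),
      b ∘ σ ∈ {c ∈ S | univ.val.map c = univ.val.map b} :=
    fun σ _ ↦ mem_filter.2 ⟨hS b hb σ, map_univ_comp_perm b σ⟩
  rw [← Fintype.card_perm, ← Finset.card_univ, card_eq_sum_card_fiberwise hmaps,
    sum_congr rfl fun c hc ↦ card_perm_comp_eq (mem_filter.1 hc).2, sum_const, smul_eq_mul]

end Rearrangement

section DecreasingRearrangement

variable {m : ℕ}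

def decreasingRearrangement (c : Fin m → ℕ) : Fin m → ℕ := c ∘ Tuple.sort c ∘ Fin.rev

theorem antitone_decreasingRearrangement (c : Fin m → ℕ) :
    Antitone (decreasingRearrangement c) :=
  (Tuple.monotone_sort c).comp_antitone Fin.rev_anti

theorem decreasingRearrangement_eq_comp_perm (c : Fin m → ℕ) :
    decreasingRearrangement c = c ∘ Fin.revPerm.trans (Tuple.sort c) :=
  rfl

theorem map_univ_decreasingRearrangement (c : Fin m → ℕ) :
    univ.val.map (decreasingRearrangement c) = univ.val.map c := by
  rw [decreasingRearrangement_eq_comp_perm, map_univ_comp_perm]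

theorem eq_of_map_univ_eq_of_antitone {b c : Fin m → ℕ} (hb : Antitone b) (hc : Antitone c)
    (h : univ.val.map b = univ.val.map c) : b = c := by
  rw [Fin.univ_val_map, Fin.univ_val_map, Multiset.coe_eq_coe] at h
  exact List.ofFn_injective (h.eq_of_sortedGE hb.sortedGE_ofFn hc.sortedGE_ofFn)

theorem card_eq_sum_card_filter_map_univ_eq {S : Finset (Fin m → ℕ)}
    (hS : ∀ c ∈ S, ∀ σ : Perm (Fin m), c ∘ σ ∈ S) :
    #S = ∑ b ∈ S with Antitone b, #{c ∈ S | univ.val.map c = univ.val.map b} := by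
  have hmaps : ∀ c ∈ S, decreasingRearrangement c ∈ {b ∈ S | Antitone b} := fun c hc ↦
    mem_filter.2 ⟨decreasingRearrangement_eq_comp_perm c ▸ hS c hc _,
      antitone_decreasingRearrangement c⟩
  rw [card_eq_sum_card_fiberwise hmaps]
  refine sum_congr rfl fun b hb ↦ congrArg card (filter_congr fun c _ ↦ ?_)
  rw [← map_univ_decreasingRearrangement c]
  exact ⟨fun h ↦ h ▸ rfl, eq_of_map_univ_eq_of_antitone (antitone_decreasingRearrangement c)
    (mem_filter.1 hb).2⟩

theorem sum_filter_antitone_factorial_div_fMult {S : Finset (Fin m → ℕ)}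
    (hS : ∀ c ∈ S, ∀ σ : Perm (Fin m), c ∘ σ ∈ S) (K : Type*) [Field K] [CharZero K] :
    ∑ b ∈ S with Antitone b, ((m ! : K) / fMult (univ.val.map b)) = #S := by
  rw [card_eq_sum_card_filter_map_univ_eq hS, cast_sum]
  refine sum_congr rfl fun b hb ↦ ?_
  have hfMult : (fMult (univ.val.map b) : K) ≠ 0 :=
    cast_ne_zero.2 (prod_pos fun _ _ ↦ factorial_pos _).ne'
  rw [div_eq_iff hfMult, ← cast_mul,
    card_filter_map_univ_eq_mul_fMult hS (mem_filter.1 hb).1, Fintype.card_fin]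

end DecreasingRearrangement

theorem card_antidiagonalTuple (k n : ℕ) :
    #(Nat.antidiagonalTuple k n) = (k + n - 1).choose n := by
  rw [← piAntidiag_univ_fin_eq_antidiagonalTuple, ← map_sym_eq_piAntidiag, card_map, sym_univ,
    Finset.card_univ, Sym.card_sym_eq_choose, Fintype.card_fin]

theorem card_filter_antidiagonalTuple_pos {k n : ℕ} (hkn : k ≤ n) :
    #{c ∈ Nat.antidiagonalTuple k n | ∀ i, 1 ≤ c i} = (n - 1).choose (n - k) := by
  obtain ⟨d, rfl⟩ := Nat.exists_eq_add_of_le hkn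
  rw [Nat.add_sub_cancel_left, ← card_antidiagonalTuple, eq_comm]
  refine card_nbij' (· + 1) (· - 1) (fun c hc ↦ ?_) (fun c hc ↦ ?_) (fun c _ ↦ ?_) (fun c hc ↦ ?_)
    <;> simp only [mem_coe, mem_filter, Nat.mem_antidiagonalTuple] at *
  · simp [sum_add_distrib, hc, add_comm]
  · simp [sum_tsub_distrib _ fun i _ ↦ hc.2 i, hc.1]
  · ext; simp
  · ext i; have := hc.2 i; simp; omega

theorem comp_perm_mem_antidiagonalTuple {k n : ℕ} {c : Fin k → ℕ}
    (hc : c ∈ Nat.antidiagonalTuple k n) (σ : Perm (Fin k)) :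
    c ∘ σ ∈ Nat.antidiagonalTuple k n := by
  rw [Nat.mem_antidiagonalTuple] at hc ⊢
  exact (Equiv.sum_comp σ c).trans hc

theorem mul_factorial_mul_factorial_mul_choose_pred {n i : ℕ} (hi : i < n) :
    n * (n - 1 - i)! * i ! * (n - 1).choose i = n.descFactorial i * (n - i)! := by
  calc n * (n - 1 - i)! * i ! * (n - 1).choose i
      = n * ((n - 1).choose i * i ! * (n - 1 - i)!) := by ring
    _ = n ! := by rw [choose_mul_factorial_mul_factorial (by omega), mul_factorial_pred (by omega)]
    _ = n.descFactorial i * (n - i)! := by rw [← factorial_mul_descFactorial hi.le, mul_comm]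

theorem sum_over_kreweras_types_general (n j : ℕ) (hj : 1 ≤ j) (hjn : j ≤ n) :
    ∑ b ∈ (Finset.Nat.antidiagonalTuple (n - j + 1) n).filter
        (fun b => (∀ r s : Fin (n - j + 1), r ≤ s → b s ≤ b r) ∧ ∀ r, 1 ≤ b r),
      ((n : ℚ) * ((n - j).factorial : ℚ) * ((j - 1).factorial : ℚ)) /
        (fMult (Multiset.map b Finset.univ.val) : ℚ) =
    (Nat.descFactorial n (j - 1) : ℚ) := by
  set m := n - j + 1
  set S := {c ∈ Nat.antidiagonalTuple m n | ∀ r, 1 ≤ c r}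
  have hS : ∀ c ∈ S, ∀ σ : Perm (Fin m), c ∘ σ ∈ S := fun c hc σ ↦ by
    rw [mem_filter] at hc ⊢
    exact ⟨comp_perm_mem_antidiagonalTuple hc.1 σ, fun r ↦ hc.2 (σ r)⟩
  have hfilter : {b ∈ Nat.antidiagonalTuple m n | (∀ r s, r ≤ s → b s ≤ b r) ∧ ∀ r, 1 ≤ b r}
      = {b ∈ S | Antitone b} := by
    rw [filter_filter]
    exact filter_congr fun b _ ↦ and_comm
  have hcardS : #S = (n - 1).choose (j - 1) := by
    rw [card_filter_antidiagonalTuple_pos (by omega), show n - m = j - 1 by omega]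
  have hm : (m ! : ℚ) ≠ 0 := cast_ne_zero.2 (factorial_ne_zero m)
  rw [hfilter, sum_congr rfl fun b _ ↦ (div_mul_div_cancel₀ hm).symm, ← mul_sum,
    sum_filter_antitone_factorial_div_fMult hS ℚ, hcardS, div_mul_eq_mul_div, div_eq_iff hm,
    show n - j = n - 1 - (j - 1) by omega, show m = n - (j - 1) by omega]
  exact_mod_cast mul_factorial_mul_factorial_mul_choose_pred (by omega)

/-- Summing `n·(n-j)!·(j-1)!/f(b₁,…,b_{n-j+1})` over all non-ascending tuples
`(b₁,…,b_{n-j+1})` of positive integers with `b₁+⋯+b_{n-j+1} = n` gives the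
falling factorial `n(n-1)⋯(n-j+2)` (with `j-1` factors). -/
theorem sum_over_kreweras_types (n j : ℕ) (hn : 1 ≤ n) (hj : 1 ≤ j) (hjn : j ≤ n) :
    ∑ b ∈ (Finset.Nat.antidiagonalTuple (n - j + 1) n).filter
        (fun b => (∀ r s : Fin (n - j + 1), r ≤ s → b s ≤ b r) ∧ ∀ r, 1 ≤ b r),
      ((n : ℚ) * ((n - j).factorial : ℚ) * ((j - 1).factorial : ℚ)) /
        (fMult (Multiset.map b Finset.univ.val) : ℚ) =
    (Nat.descFactorial n (j - 1) : ℚ) :=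
  sum_over_kreweras_types_general n j hj hjn
end

section
/- Let c_n = W_n β^{n-1} for n ≥ 1, where (W_n) is any sequence of reals and β ∈ ℝ. Then the moment sequence defined by the free moment-cumulant relation m_n = Σ_{π ∈ NC(n)} ∏_{V ∈ π} c_{|V|} equals m_n = Σ_{j=1}^n Σ_{b₁+⋯+b_j=n, b₁≥⋯≥b_j≥1} [n(n-1)⋯(n-j+2)/f(b₁,…,b_j)] ∏_{r=1}^j W_{b_r} β^{b_r - 1}. -/
/-!
Encode a noncrossing partition of `{0, …, n-1}` by its Łukasiewicz sequence `u`, where `u k` is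
the size of the block with minimum `k` (and `0` if `k` is no block minimum). This is a bijection
onto the tuples `(u 0, …, u n)` with sum `n` whose partial sums dominate, `∑_{k<i} u k ≥ i` for
`i ≤ n`, and it turns `∏_V c_{|V|}` into `∏_{u k ≠ 0} c_{u k}`. The inverse puts `i` in the block
of the last `m ≤ i` with `∑_{m ≤ k ≤ i} u k ≥ i - m + 1`; noncrossingness is exactly what makes
this recover the block minimum.

By the cycle lemma exactly one of the `n + 1` rotations of a tuple with sum `n` is dominating, so
`(n + 1) m_n` is the total weight of all such tuples. Grouping them by their support (`C(n+1, j)`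
supports of size `j`), and then the compositions of `n` into `j` positive parts by their
decreasing rearrangement `b` (each arising from `j! / f(b)` compositions), gives
`(n + 1) m_n = ∑_j ∑_b C(n+1, j) j! / f(b) ∏_r c_{b_r}`; finally
`C(n+1, j) j! = (n + 1) n (n-1) ⋯ (n-j+2)`.
-/

open scoped Classical

/-- A partition of the totally ordered set `Fin n` is noncrossing. -/
def IsNoncrossing {n : ℕ} (P : Finpartition (Finset.univ : Finset (Fin n))) : Prop :=
  ¬ ∃ p₁ q₁ p₂ q₂ : Fin n, p₁ < q₁ ∧ q₁ < p₂ ∧ p₂ < q₂ ∧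
      ∃ B ∈ P.parts, ∃ C ∈ P.parts, B ≠ C ∧ p₁ ∈ B ∧ p₂ ∈ B ∧ q₁ ∈ C ∧ q₂ ∈ C

open Finset Finset.Nat

lemma Nat.findGreatest_congr {P Q : ℕ → Prop} [DecidablePred P] [DecidablePred Q] {N : ℕ}
    (h : ∀ m ≤ N, P m ↔ Q m) : Nat.findGreatest P N = Nat.findGreatest Q N := by
  induction N with
  | zero => simp
  | succ N ih =>
    rw [Nat.findGreatest_succ, Nat.findGreatest_succ, ih fun m hm => h m (by omega)]
    simp only [h (N + 1) le_rfl]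

lemma exists_first_argmin {β : Type*} [LinearOrder β] (f : ℕ → β) (N : ℕ) :
    ∃ K ≤ N, (∀ l ≤ N, f K ≤ f l) ∧ ∀ r < K, f K < f r := by
  obtain ⟨k, hk, hmin⟩ := exists_min_image (range (N + 1)) f ⟨0, by simp⟩
  have hex : ∃ K, K ≤ N ∧ ∀ l ≤ N, f K ≤ f l :=
    ⟨k, by simpa [Nat.lt_succ_iff] using hk, fun l hl => hmin l (by simpa [Nat.lt_succ_iff])⟩
  obtain ⟨hKN, hK⟩ := Nat.find_spec hex
  refine ⟨_, hKN, hK, fun r hr => ?_⟩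
  have := Nat.find_min hex hr
  push Not at this
  obtain ⟨l, hl, hlr⟩ := this (by omega)
  exact (hK l hl).trans_lt hlr

lemma Fin.card_filter_val_mem {n : ℕ} (s : Finset ℕ) (hs : ∀ k ∈ s, k < n) :
    #{x : Fin n | (x : ℕ) ∈ s} = #s := by
  rw [← card_attachFin s hs]
  congr 1
  ext x
  simp [mem_attachFin]

lemma Nat.choose_succ_mul_factorial (n : ℕ) {j : ℕ} (hj : 1 ≤ j) :
    (n + 1).choose j * j.factorial = (n + 1) * n.descFactorial (j - 1) := by
  obtain ⟨k, rfl⟩ := Nat.exists_eq_add_of_le' hj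
  rw [mul_comm, ← Nat.descFactorial_eq_factorial_mul_choose, Nat.succ_descFactorial_succ,
    Nat.add_sub_cancel]

section Noncrossing

variable {α : Type*} [Fintype α] [DecidableEq α]

lemma Finpartition.eq_of_part_eq {P Q : Finpartition (univ : Finset α)}
    (h : ∀ x, P.part x = Q.part x) : P = Q := by
  ext B
  constructor
  · intro hB
    obtain ⟨x, -, rfl⟩ := P.part_surjOn hB
    exact h x ▸ Q.part_mem.2 (mem_univ x)
  · intro hB
    obtain ⟨x, -, rfl⟩ := Q.part_surjOn hB
    exact (h x).symm ▸ P.part_mem.2 (mem_univ x)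

lemma isNoncrossing_iff {n : ℕ} {P : Finpartition (univ : Finset (Fin n))} :
    IsNoncrossing P ↔ ∀ p₁ q₁ p₂ q₂ : Fin n, p₁ < q₁ → q₁ < p₂ → p₂ < q₂ →
      P.part p₁ = P.part p₂ → P.part q₁ = P.part q₂ → P.part p₁ = P.part q₁ := by
  have hmem (x : Fin n) : x ∈ P.part x := P.mem_part (mem_univ x)
  have hpart (x : Fin n) : P.part x ∈ P.parts := P.part_mem.2 (mem_univ x)
  constructor
  · intro hP p₁ q₁ p₂ q₂ h₁ h₂ h₃ hp hq
    by_contra hne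
    exact hP ⟨p₁, q₁, p₂, q₂, h₁, h₂, h₃, _, hpart p₁, _, hpart q₁, hne, hmem p₁,
      hp ▸ hmem p₂, hmem q₁, hq ▸ hmem q₂⟩
  · rintro hP ⟨p₁, q₁, p₂, q₂, h₁, h₂, h₃, B, hB, C, hC, hBC, hp₁, hp₂, hq₁, hq₂⟩
    rw [← P.part_eq_of_mem hB hp₁, ← P.part_eq_of_mem hC hq₁] at hBC
    exact hBC (hP p₁ q₁ p₂ q₂ h₁ h₂ h₃ (by rw [P.part_eq_of_mem hB hp₁, P.part_eq_of_mem hB hp₂])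
      (by rw [P.part_eq_of_mem hC hq₁, P.part_eq_of_mem hC hq₂]))

namespace Finpartition

variable [LinearOrder α] (P : Finpartition (univ : Finset α)) {x y : α}

def partMin (x : α) : α := (P.part x).min' ⟨x, P.mem_part (mem_univ x)⟩

lemma partMin_mem : P.partMin x ∈ P.part x := min'_mem _ _

lemma partMin_le (hy : y ∈ P.part x) : P.partMin x ≤ y := min'_le _ _ hy

lemma partMin_le_self : P.partMin x ≤ x := P.partMin_le (P.mem_part (mem_univ x))

lemma part_partMin : P.part (P.partMin x) = P.part x :=
  P.part_eq_of_mem (P.part_mem.2 (mem_univ x)) P.partMin_mem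

lemma partMin_eq_partMin_iff : P.partMin x = P.partMin y ↔ P.part x = P.part y := by
  refine ⟨fun h => by rw [← P.part_partMin, h, P.part_partMin], fun h => ?_⟩
  unfold partMin
  congr 1

end Finpartition

end Noncrossing

namespace IsNoncrossing

variable {n : ℕ} {P : Finpartition (univ : Finset (Fin n))} {i x : Fin n}

lemma partMin_le_partMin (hP : IsNoncrossing P) (h₁ : P.partMin i ≤ x) (h₂ : x ≤ i) :
    P.partMin i ≤ P.partMin x := by
  by_contra! hlt
  have hne : P.part x ≠ P.part i := fun h => hlt.ne ((P.partMin_eq_partMin_iff).2 h)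
  have hax : P.partMin i < x := lt_of_le_of_ne h₁ fun h => hne (h ▸ P.part_partMin)
  have hxi : x < i := lt_of_le_of_ne h₂ fun h => hne (h ▸ rfl)
  refine hne ?_
  rw [← P.part_partMin (x := x), ← P.part_partMin (x := i)]
  exact isNoncrossing_iff.1 hP _ _ _ _ hlt hax hxi (by rw [P.part_partMin])
    (by rw [P.part_partMin])

lemma lt_of_partMin_lt (hP : IsNoncrossing P) (h₁ : P.partMin i < P.partMin x)
    (h₂ : P.partMin x ≤ i) : x < i := by
  by_contra! hix
  have hne : P.part i ≠ P.part x := fun h => h₁.ne ((P.partMin_eq_partMin_iff).2 h)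
  have hci : P.partMin x < i := lt_of_le_of_ne h₂ fun h => hne (h ▸ P.part_partMin)
  have hix' : i < x := lt_of_le_of_ne hix fun h => hne (h ▸ rfl)
  refine hne ?_
  rw [← P.part_partMin (x := x), ← P.part_partMin (x := i)]
  exact isNoncrossing_iff.1 hP _ _ _ _ h₁ hci hix' (by rw [P.part_partMin])
    (by rw [P.part_partMin])

end IsNoncrossing

section Rearrangement

variable {α : Type*} [LinearOrder α] {j : ℕ}

lemma map_univ_val_comp_perm {β : Type*} (a : Fin j → β) (σ : Equiv.Perm (Fin j)) :
    univ.val.map (a ∘ σ) = univ.val.map a := by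
  rw [← Multiset.map_map, Multiset.map_univ_val_equiv]

lemma map_univ_val_cons {β : Type*} (x : β) (a : Fin j → β) :
    univ.val.map (Fin.cons x a : Fin (j + 1) → β) = x ::ₘ univ.val.map a := by
  simp [List.ofFn_succ]

lemma eq_of_antitone_of_map_eq {a b : Fin j → α} (ha : Antitone a) (hb : Antitone b)
    (h : univ.val.map a = univ.val.map b) : a = b := by
  simp only [Fin.univ_val_map, Multiset.coe_eq_coe] at h
  exact List.ofFn_injective (h.eq_of_sortedGE ha.sortedGE_ofFn hb.sortedGE_ofFn)

lemma forall_of_map_eq {β : Type*} {p : β → Prop} {a b : Fin j → β}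
    (h : univ.val.map a = univ.val.map b) (hb : ∀ r, p (b r)) (r : Fin j) : p (a r) := by
  obtain ⟨s, -, hs⟩ := Multiset.mem_map.1 (h ▸ Multiset.mem_map_of_mem a (mem_univ_val r))
  exact hs ▸ hb s

lemma prod_eq_prod_of_map_eq {β M : Type*} [CommMonoid M] (g : β → M) {a b : Fin j → β}
    (h : univ.val.map a = univ.val.map b) : ∏ r, g (a r) = ∏ r, g (b r) := by
  rw [← prod_map_val, ← prod_map_val]
  simpa only [Multiset.map_map, Function.comp_def] using congrArg (fun M => (M.map g).prod) h

def antitoneSort (a : Fin j → α) : Fin j → α := a ∘ Tuple.sort a ∘ Fin.revPerm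

lemma antitone_antitoneSort (a : Fin j → α) : Antitone (antitoneSort a) :=
  (Tuple.monotone_sort a).comp_antitone Fin.rev_anti

lemma map_antitoneSort (a : Fin j → α) : univ.val.map (antitoneSort a) = univ.val.map a :=
  (map_univ_val_comp_perm (a ∘ Tuple.sort a) Fin.revPerm).trans (map_univ_val_comp_perm a _)

end Rearrangement

section Multiplicities

lemma fMult_ne_zero (M : Multiset ℕ) : fMult M ≠ 0 :=
  prod_ne_zero_iff.2 fun _ _ => Nat.factorial_ne_zero _

lemma fMult_eq_prod_of_subset (M : Multiset ℕ) {S : Finset ℕ} (hS : M.toFinset ⊆ S) :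
    fMult M = ∏ k ∈ S, (M.count k).factorial :=
  prod_subset hS fun k _ hk => by rw [Multiset.count_eq_zero.2 (mt Multiset.mem_toFinset.2 hk)]; rfl

lemma fMult_cons (k : ℕ) (M : Multiset ℕ) : fMult (k ::ₘ M) = (M.count k + 1) * fMult M := by
  have hS : M.toFinset ⊆ insert k M.toFinset := subset_insert _ _
  rw [fMult_eq_prod_of_subset (k ::ₘ M) (S := insert k M.toFinset) (by simp),
    fMult_eq_prod_of_subset _ hS,
    ← mul_prod_erase _ _ (mem_insert_self k _), ← mul_prod_erase _ _ (mem_insert_self k _),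
    Multiset.count_cons_self, Nat.factorial_succ, mul_assoc,
    prod_congr rfl fun x hx => by rw [Multiset.count_cons_of_ne (ne_of_mem_erase hx)]]

lemma fMult_eq_count_mul_fMult_erase {M : Multiset ℕ} {k : ℕ} (hk : k ∈ M) :
    fMult M = M.count k * fMult (M.erase k) := by
  conv_lhs => rw [← Multiset.cons_erase hk]
  rw [fMult_cons, Multiset.count_erase_self, Nat.sub_add_cancel (Multiset.count_pos.2 hk)]

lemma mem_antidiagonalTuple_of_map_eq {j : ℕ} {a : Fin j → ℕ} {M : Multiset ℕ}
    (h : univ.val.map a = M) : a ∈ antidiagonalTuple j M.sum := by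
  rw [mem_antidiagonalTuple, ← h, sum_map_val]

lemma card_filter_map_eq_mul_fMult :
    ∀ (j : ℕ) (M : Multiset ℕ), Multiset.card M = j →
      #{a ∈ antidiagonalTuple j M.sum | univ.val.map a = M} * fMult M = j.factorial
  | 0, M, hM => by
    obtain rfl := Multiset.card_eq_zero.1 hM
    simp [fMult]
  | j + 1, M, hM => by
    set F := {a ∈ antidiagonalTuple (j + 1) M.sum | univ.val.map a = M}
    have hmaps : ∀ a ∈ F, a 0 ∈ M.toFinset := fun a ha => by
      rw [Multiset.mem_toFinset, ← (mem_filter.1 ha).2]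
      exact Multiset.mem_map_of_mem _ (mem_univ_val 0)
    have hfibre (k : ℕ) (hk : k ∈ M) : #{a ∈ F | a 0 = k} =
        #{a ∈ antidiagonalTuple j (M.erase k).sum | univ.val.map a = M.erase k} := by
      refine card_nbij' Fin.tail (fun a : Fin j → ℕ => (Fin.cons k a : Fin (j + 1) → ℕ))
        (fun a ha => ?_) (fun a ha => ?_) (fun a ha => ?_) fun a _ => Fin.tail_cons _ _
      · simp only [F, mem_coe, mem_filter] at ha ⊢
        have hmap := map_univ_val_cons (a 0) (Fin.tail a)
        rw [Fin.cons_self_tail, ha.1.2, ha.2] at hmap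
        rw [hmap, Multiset.erase_cons_head]
        exact ⟨mem_antidiagonalTuple_of_map_eq rfl, rfl⟩
      · simp only [F, mem_coe, mem_filter] at ha ⊢
        have hmap : univ.val.map (Fin.cons k a : Fin (j + 1) → ℕ) = M := by
          rw [map_univ_val_cons, ha.2, Multiset.cons_erase hk]
        exact ⟨⟨mem_antidiagonalTuple_of_map_eq hmap, hmap⟩, rfl⟩
      · simp only [F, mem_coe, mem_filter] at ha
        rw [← ha.2]
        exact Fin.cons_self_tail a
    rw [card_eq_sum_card_fiberwise hmaps, sum_mul]
    calc ∑ k ∈ M.toFinset, #{a ∈ F | a 0 = k} * fMult M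
        = ∑ k ∈ M.toFinset, j.factorial * M.count k := sum_congr rfl fun k hk => by
          have hk := Multiset.mem_toFinset.1 hk
          rw [hfibre k hk, fMult_eq_count_mul_fMult_erase hk, mul_left_comm,
            card_filter_map_eq_mul_fMult j _ (by rw [Multiset.card_erase_of_mem hk, hM]; rfl),
            mul_comm]
      _ = (j + 1).factorial := by
        rw [← mul_sum, Multiset.toFinset_sum_count_eq, hM, Nat.factorial_succ, mul_comm]

end Multiplicities

namespace Lukasiewicz

variable {n : ℕ} {t : ℕ → ℕ} {i k m p q : ℕ}

def height (t : ℕ → ℕ) (m : ℕ) : ℤ := ∑ k ∈ range m, (t k : ℤ) - m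

structure IsPath (t : ℕ → ℕ) (n : ℕ) : Prop where
  height_nonneg : ∀ i ≤ n, 0 ≤ height t i
  height_eq_zero : height t n = 0

/-- For the Łukasiewicz sequence of a noncrossing partition, the opener of `i` is the minimum of
the block of `i` (`opener_ofPartition`). -/
def opener (t : ℕ → ℕ) (i : ℕ) : ℕ :=
  Nat.findGreatest (fun m => height t m ≤ height t (i + 1)) i

@[simp] lemma height_zero : height t 0 = 0 := by simp [height]

lemma height_succ (t : ℕ → ℕ) (i : ℕ) : height t (i + 1) = height t i + t i - 1 := by
  simp only [height, sum_range_succ]; push_cast; ring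

lemma height_eq (t : ℕ → ℕ) (i : ℕ) : height t i = ((∑ k ∈ range i, t k : ℕ) : ℤ) - i := by
  simp [height]

lemma height_congr {t t' : ℕ → ℕ} (h : ∀ k < i, t k = t' k) : height t i = height t' i := by
  simp only [height]
  congr 1
  exact sum_congr rfl fun k hk => by rw [h k (mem_range.1 hk)]

lemma height_sub_height (t : ℕ → ℕ) (hmi : m ≤ i) :
    height t i - height t m = ((∑ k ∈ Ico m i, t k : ℕ) : ℤ) - (i - m : ℕ) := by
  rw [height_eq, height_eq, ← sum_range_add_sum_Ico t hmi]
  push_cast [hmi]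
  ring

lemma opener_le : opener t i ≤ i := Nat.findGreatest_le i

lemma le_opener (hm : m ≤ i) (h : height t m ≤ height t (i + 1)) : m ≤ opener t i :=
  Nat.le_findGreatest hm h

lemma height_opener_le (h : 0 ≤ height t (i + 1)) : height t (opener t i) ≤ height t (i + 1) :=
  Nat.findGreatest_spec (P := fun m => height t m ≤ height t (i + 1)) (Nat.zero_le i)
    (by rwa [height_zero])

lemma height_lt_of_opener_lt (h : opener t i < m) (hm : m ≤ i) :
    height t (i + 1) < height t m :=
  not_le.1 (Nat.findGreatest_is_greatest h hm)

lemma height_succ_lt_of_opener_le (h : opener t q ≤ p) (hpq : p < q) :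
    height t (q + 1) < height t (p + 1) :=
  height_lt_of_opener_lt (by omega) hpq

lemma opener_eq_self (h : t i ≠ 0) : opener t i = i :=
  Nat.findGreatest_eq (by rw [height_succ]; omega)

lemma apply_opener_ne_zero (h : 0 ≤ height t (i + 1)) : t (opener t i) ≠ 0 := by
  intro h0
  have hspec := height_opener_le h
  rcases opener_le.eq_or_lt with heq | hlt
  · rw [heq] at h0 hspec
    rw [height_succ, h0] at hspec
    omega
  · have := le_opener (t := t) hlt (by rw [height_succ, h0]; omega)
    omega

/-- Openers are nested; this is what makes `toPartition t n` noncrossing. -/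
lemma opener_le_opener (hpq : p < q) (hq : 0 ≤ height t (q + 1)) (h : opener t q ≤ p) :
    opener t q ≤ opener t p := by
  by_contra! hlt
  have h₁ := height_lt_of_opener_lt hlt h
  have h₂ := height_opener_le hq
  have h₃ := height_succ_lt_of_opener_le (t := t) (by omega) hpq
  omega

lemma opener_congr {t' : ℕ → ℕ} (h : ∀ k ≤ i, t k = t' k) : opener t i = opener t' i :=
  Nat.findGreatest_congr fun m hm => by
    rw [height_congr fun k hk => h k (by omega), height_congr fun k hk => h k (by omega)]

section ToPartition

noncomputable def toPartition (t : ℕ → ℕ) (n : ℕ) : Finpartition (univ : Finset (Fin n)) :=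
  Finpartition.ofSetoid (Setoid.ker fun x : Fin n => opener t x)

lemma mem_part_toPartition {x y : Fin n} :
    y ∈ (toPartition t n).part x ↔ opener t y = opener t x :=
  Finpartition.mem_part_ofSetoid_iff_rel.trans eq_comm

lemma part_toPartition_eq_iff {x y : Fin n} :
    (toPartition t n).part x = (toPartition t n).part y ↔ opener t x = opener t y := by
  rw [← (toPartition t n).mem_part_iff_part_eq_part (mem_univ x) (mem_univ y),
    mem_part_toPartition]

lemma toPartition_congr {t' : ℕ → ℕ} (h : ∀ k < n, t k = t' k) :
    toPartition t n = toPartition t' n :=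
  Finpartition.eq_of_part_eq fun x => ext fun y => by
    rw [mem_part_toPartition, mem_part_toPartition,
      opener_congr fun k hk => h k (by omega), opener_congr fun k hk => h k (by omega)]

lemma IsPath.height_succ_nonneg (ht : IsPath t n) (x : Fin n) : 0 ≤ height t (x + 1) :=
  ht.height_nonneg _ x.isLt

lemma IsPath.isNoncrossing_toPartition (ht : IsPath t n) : IsNoncrossing (toPartition t n) := by
  refine isNoncrossing_iff.2 fun p₁ q₁ p₂ q₂ h₁ h₂ h₃ hp hq => ?_
  simp only [part_toPartition_eq_iff, Fin.lt_def] at hp hq h₁ h₂ h₃ ⊢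
  rcases lt_trichotomy (opener t p₁) (opener t q₁) with hlt | heq | hgt
  · have := opener_le_opener h₃ (ht.height_succ_nonneg q₂) (hq ▸ opener_le.trans h₂.le)
    omega
  · exact heq
  · have := opener_le_opener h₂ (ht.height_succ_nonneg p₂) (hp ▸ opener_le.trans h₁.le)
    omega

lemma IsPath.card_filter_opener_eq (ht : IsPath t n) (hm : m < n) :
    #{x : Fin n | opener t x = m} = t m := by
  have hle (m : ℕ) : #{x : Fin n | opener t x = m} ≤ t m := by
    -- `x ↦ height t (x + 1)` is injective on the fibre, with values in an interval of length `t m`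
    calc #{x : Fin n | opener t x = m}
        ≤ #(Icc (height t m) (height t m + t m - 1)) := by
          refine card_le_card_of_injOn (fun x => height t (x + 1)) ?_ ?_
          · intro x hx
            simp only [mem_coe, mem_filter, mem_univ, true_and] at hx
            simp only [coe_Icc, Set.mem_Icc]
            refine ⟨hx ▸ height_opener_le (ht.height_succ_nonneg x), ?_⟩
            have hmx : m ≤ x := hx ▸ opener_le
            rcases hmx.eq_or_lt with heq | hlt
            · rw [heq, height_succ t]
            · have := height_succ_lt_of_opener_le hx.le hlt
              rw [height_succ t m] at this
              omega
          · intro x hx y hy hxy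
            simp only [mem_coe, mem_filter, mem_univ, true_and] at hx hy
            by_contra hne
            rcases Fin.lt_or_lt_of_ne hne with hlt | hlt
            · exact (height_succ_lt_of_opener_le (hy ▸ hx ▸ opener_le) hlt).ne' hxy
            · exact (height_succ_lt_of_opener_le (hx ▸ hy ▸ opener_le) hlt).ne hxy
      _ = t m := by simp
  have hsum : ∑ m ∈ range n, #{x : Fin n | opener t x = m} = ∑ m ∈ range n, t m := by
    rw [← card_eq_sum_card_fiberwise fun x _ => mem_range.2 (opener_le.trans_lt x.isLt)]
    have := ht.height_eq_zero
    rw [height_eq] at this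
    simp only [card_univ, Fintype.card_fin]
    omega
  exact (sum_eq_sum_iff_of_le fun m _ => hle m).1 hsum m (mem_range.2 hm)

lemma IsPath.partMin_toPartition (ht : IsPath t n) (x : Fin n) :
    ((toPartition t n).partMin x : ℕ) = opener t x := by
  set o : Fin n := ⟨opener t x, opener_le.trans_lt x.isLt⟩
  have ho : o ∈ (toPartition t n).part x :=
    mem_part_toPartition.2 (opener_eq_self (apply_opener_ne_zero (ht.height_succ_nonneg x)))
  refine le_antisymm (Fin.le_iff_val_le_val.1 (Finpartition.partMin_le _ ho)) ?_
  have := mem_part_toPartition.1 (Finpartition.partMin_mem (toPartition t n) (x := x))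
  exact this ▸ opener_le

end ToPartition

section OfPartition

variable {P : Finpartition (univ : Finset (Fin n))}

/-- The Łukasiewicz sequence of `P`. -/
def ofPartition (P : Finpartition (univ : Finset (Fin n))) (k : ℕ) : ℕ :=
  #{x | (P.partMin x : ℕ) = k}

lemma sum_ofPartition (P : Finpartition (univ : Finset (Fin n))) (s : Finset ℕ) :
    ∑ k ∈ s, ofPartition P k = #{x | (P.partMin x : ℕ) ∈ s} := by
  rw [card_eq_sum_card_fiberwise (s := {x | (P.partMin x : ℕ) ∈ s})
    (f := fun x => (P.partMin x : ℕ)) (t := s) fun x hx => (mem_filter.1 hx).2]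
  refine sum_congr rfl fun k hk => congrArg card ?_
  ext x
  simp only [mem_filter, mem_univ, true_and]
  exact ⟨fun h => ⟨h ▸ hk, h⟩, And.right⟩

lemma ofPartition_eq_zero (hk : n ≤ k) : ofPartition P k = 0 := by
  refine card_eq_zero.2 (filter_eq_empty_iff.2 fun x _ => ?_)
  have := (P.partMin x).isLt
  omega

lemma ofPartition_min' {V : Finset (Fin n)} (hV : V ∈ P.parts) :
    ofPartition P (V.min' (P.nonempty_of_mem_parts hV)) = #V := by
  refine congrArg card (ext fun x => ?_)
  simp only [mem_filter, mem_univ, true_and, Fin.val_inj]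
  constructor
  · intro h
    have hmem : V.min' _ ∈ P.part x := h ▸ P.partMin_mem
    rw [← P.eq_of_mem_parts (P.part_mem.2 (mem_univ x)) hV hmem (min'_mem _ _)]
    exact P.mem_part (mem_univ x)
  · intro hx
    have hpart : P.part x = V := P.part_eq_of_mem hV hx
    have h₁ : V.min' (P.nonempty_of_mem_parts hV) ∈ P.part x := by
      rw [hpart]; exact min'_mem _ _
    have h₂ : P.partMin x ∈ V := by rw [← hpart]; exact P.partMin_mem
    exact le_antisymm (P.partMin_le h₁) (min'_le _ _ h₂)

lemma isPath_ofPartition (P : Finpartition (univ : Finset (Fin n))) :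
    IsPath (ofPartition P) n where
  height_nonneg i hi := by
    have hcard : #{x : Fin n | (x : ℕ) ∈ range i} = i := by
      rw [Fin.card_filter_val_mem _ fun k hk => (mem_range.1 hk).trans_le hi, card_range]
    rw [height_eq, sum_ofPartition, sub_nonneg, Nat.cast_le]
    refine hcard.symm.trans_le (card_le_card fun x hx => ?_)
    simp only [mem_filter, mem_univ, true_and, mem_range] at hx ⊢
    exact (Fin.le_def.1 P.partMin_le_self).trans_lt hx
  height_eq_zero := by
    rw [height_eq, sum_ofPartition, filter_true_of_mem fun x _ => mem_range.2 (P.partMin x).isLt]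
    simp

lemma opener_ofPartition (hP : IsNoncrossing P) (i : Fin n) :
    opener (ofPartition P) i = P.partMin i := by
  set a := P.partMin i
  have hai : (a : ℕ) ≤ (i : ℕ) := Fin.le_def.1 P.partMin_le_self
  have hband (m : ℕ) (hm : m ≤ (i : ℕ) + 1) :
      height (ofPartition P) (i + 1) - height (ofPartition P) m
        = (#{x | (P.partMin x : ℕ) ∈ Ico m ((i : ℕ) + 1)} : ℤ) - ((i : ℕ) + 1 - m : ℕ) := by
    rw [height_sub_height _ hm, sum_ofPartition]
  -- every point of `[a, i]` lies in a block whose minimum is in `[a, i]`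
  have hcand : height (ofPartition P) a ≤ height (ofPartition P) (i + 1) := by
    have hcard : (i : ℕ) + 1 - a ≤ #{x | (P.partMin x : ℕ) ∈ Ico (a : ℕ) ((i : ℕ) + 1)} := by
      rw [← Nat.card_Ico, ← Fin.card_filter_val_mem _ fun k hk => (mem_Ico.1 hk).2.trans_le i.isLt]
      refine card_le_card fun x hx => ?_
      simp only [mem_filter, mem_univ, true_and, mem_Ico] at hx ⊢
      exact ⟨IsNoncrossing.partMin_le_partMin hP (Fin.le_def.2 hx.1) (Fin.le_def.2 (by omega)),
        (Fin.le_def.1 P.partMin_le_self).trans_lt hx.2⟩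
    have := hband a (by omega)
    omega
  -- a block with minimum in `(a, i]` lies inside `[a, i)`
  have hgreatest (m : ℕ) (ham : (a : ℕ) < m) (hmi : m ≤ (i : ℕ)) :
      height (ofPartition P) (i + 1) < height (ofPartition P) m := by
    have hcard : #{x | (P.partMin x : ℕ) ∈ Ico m ((i : ℕ) + 1)} ≤ (i : ℕ) - m := by
      rw [← Nat.card_Ico, ← Fin.card_filter_val_mem _ fun k hk => (mem_Ico.1 hk).2.trans i.isLt]
      refine card_le_card fun x hx => ?_
      simp only [mem_filter, mem_univ, true_and, mem_Ico] at hx ⊢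
      exact ⟨hx.1.trans (Fin.le_def.1 P.partMin_le_self),
        IsNoncrossing.lt_of_partMin_lt hP (Fin.lt_def.2 (by omega)) (Fin.le_def.2 (by omega))⟩
    have := hband m (by omega)
    omega
  refine le_antisymm (not_lt.1 fun h => ?_) (le_opener hai hcand)
  exact (hgreatest _ h opener_le).not_ge
    (height_opener_le ((isPath_ofPartition P).height_succ_nonneg i))

lemma toPartition_ofPartition (hP : IsNoncrossing P) :
    toPartition (ofPartition P) n = P := by
  refine Finpartition.eq_of_part_eq fun x => ?_
  ext y
  rw [mem_part_toPartition, opener_ofPartition hP, opener_ofPartition hP, Fin.val_inj,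
    P.partMin_eq_partMin_iff, P.mem_part_iff_part_eq_part (mem_univ y) (mem_univ x)]

lemma IsPath.ofPartition_toPartition (ht : IsPath t n) (hk : k < n) :
    ofPartition (toPartition t n) k = t k := by
  simp only [ofPartition, ht.partMin_toPartition]
  exact ht.card_filter_opener_eq hk

end OfPartition

section Tuples

open Fin.NatCast

variable {u : Fin (n + 1) → ℕ}

/-- The index `l` is read modulo `n + 1`. -/
def periodize (u : Fin (n + 1) → ℕ) (l : ℕ) : ℕ := u l

def rotate (k : ℕ) (u : Fin (n + 1) → ℕ) : Fin (n + 1) → ℕ := u ∘ Equiv.addRight (k : Fin (n + 1))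

def IsDominating (u : Fin (n + 1) → ℕ) : Prop := ∀ i ≤ n, 0 ≤ height (periodize u) i

lemma periodize_add (u : Fin (n + 1) → ℕ) (k l : ℕ) :
    periodize u (k + l) = u (k + l : Fin (n + 1)) := by
  simp [periodize]

lemma periodize_natCast_apply (f : ℕ → ℕ) (hk : k < n + 1) :
    periodize (fun i : Fin (n + 1) => f i) k = f k := by
  simp [periodize, Nat.mod_eq_of_lt hk]

lemma sum_range_periodize (u : Fin (n + 1) → ℕ) (m : ℕ) :
    ∑ l ∈ range (n + 1), periodize u (m + l) = ∑ i, u i := by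
  rw [← Fin.sum_univ_eq_sum_range (fun l => periodize u (m + l))]
  simp only [periodize_add, Fin.cast_val_eq_self]
  exact Fintype.sum_equiv (Equiv.addLeft (m : Fin (n + 1))) _ _ fun _ => rfl

lemma height_periodize_add_succ (hu : ∑ i, u i = n) (m : ℕ) :
    height (periodize u) (m + (n + 1)) = height (periodize u) m - 1 := by
  rw [height_eq, height_eq, sum_range_add, sum_range_periodize, hu]
  push_cast
  ring

lemma height_periodize_add_periodize (hu : ∑ i, u i = n) :
    height (periodize u) n + periodize u n = 0 := by
  have h := height_periodize_add_succ hu 0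
  rw [zero_add, height_succ, height_zero] at h
  omega

lemma height_periodize_rotate (u : Fin (n + 1) → ℕ) (k j : ℕ) :
    height (periodize (rotate k u)) j = height (periodize u) (k + j) - height (periodize u) k := by
  have h (l : ℕ) : periodize (rotate k u) l = periodize u (k + l) := by
    simp [periodize, rotate, add_comm]
  simp only [height, sum_range_add, h]
  push_cast
  ring

lemma isDominating_rotate_iff :
    IsDominating (rotate k u) ↔ ∀ j ≤ n, height (periodize u) k ≤ height (periodize u) (k + j) := by
  simp only [IsDominating, height_periodize_rotate, sub_nonneg]

/-- The cycle lemma. The dominating rotation starts at the first minimum of the height, which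
drops by one over each period. -/
lemma existsUnique_isDominating_rotate (hu : ∑ i, u i = n) :
    ∃! k, k < n + 1 ∧ IsDominating (rotate k u) := by
  have hper := height_periodize_add_succ hu
  obtain ⟨K, hKN, hmin, hfirst⟩ := exists_first_argmin (height (periodize u)) n
  refine ⟨K, ⟨by omega, isDominating_rotate_iff.2 fun j hj => ?_⟩, ?_⟩
  · by_cases hKj : K + j ≤ n
    · exact hmin _ hKj
    · have hr := hper (K + j - (n + 1))
      rw [show K + j - (n + 1) + (n + 1) = K + j by omega] at hr
      have := hfirst (K + j - (n + 1)) (by omega)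
      omega
  · rintro k ⟨hk, hdom⟩
    rw [isDominating_rotate_iff] at hdom
    by_contra hne
    rcases Nat.lt_or_gt_of_ne hne with hlt | hgt
    · have := hdom (K - k) (by omega)
      rw [show k + (K - k) = K by omega] at this
      exact (hfirst k hlt).not_ge this
    · have := hdom (K + (n + 1) - k) (by omega)
      rw [show k + (K + (n + 1) - k) = K + (n + 1) by omega, hper] at this
      have := hmin k (by omega)
      omega

lemma IsDominating.isPath (hu : ∑ i, u i = n) (hd : IsDominating u) : IsPath (periodize u) n :=
  ⟨hd, by have := height_periodize_add_periodize hu; have := hd n le_rfl; omega⟩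

lemma isDominating_ofPartition (P : Finpartition (univ : Finset (Fin n))) :
    IsDominating fun i : Fin (n + 1) => ofPartition P i := fun i hi => by
  rw [height_congr fun k hk => periodize_natCast_apply _ (by omega)]
  exact (isPath_ofPartition P).height_nonneg i hi

lemma sum_fin_ofPartition (P : Finpartition (univ : Finset (Fin n))) :
    ∑ i : Fin (n + 1), ofPartition P i = n := by
  rw [Fin.sum_univ_eq_sum_range (ofPartition P), sum_ofPartition,
    filter_true_of_mem fun x _ => mem_range.2 ((P.partMin x).isLt.trans (Nat.lt_succ_self n))]
  simp

end Tuples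

section Weights

open Fin.NatCast

variable {R : Type*} [CommSemiring R] {u : Fin (n + 1) → ℕ}

def tupleWeight (g : ℕ → R) {m : ℕ} (u : Fin m → ℕ) : R := ∏ i with u i ≠ 0, g (u i)

lemma tupleWeight_comp_equiv (g : ℕ → R) {m : ℕ} (u : Fin m → ℕ) (σ : Fin m ≃ Fin m) :
    tupleWeight g (u ∘ σ) = tupleWeight g u := by
  simp only [tupleWeight, prod_filter]
  exact σ.prod_comp fun i => if u i ≠ 0 then g (u i) else 1

lemma tupleWeight_rotate (g : ℕ → R) (k : ℕ) (u : Fin (n + 1) → ℕ) :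
    tupleWeight g (rotate k u) = tupleWeight g u :=
  tupleWeight_comp_equiv g u _

lemma tupleWeight_ofPartition (g : ℕ → R) (P : Finpartition (univ : Finset (Fin n))) :
    tupleWeight g (fun i : Fin (n + 1) => ofPartition P i) = ∏ V ∈ P.parts, g #V := by
  symm
  refine prod_bij (fun V hV => (V.min' (P.nonempty_of_mem_parts hV)).castSucc) ?_ ?_ ?_ ?_
  · intro V hV
    simp [ofPartition_min' hV, P.nonempty_of_mem_parts hV |>.ne_empty]
  · intro V hV W hW h
    rw [Fin.castSucc_inj] at h
    exact P.eq_of_mem_parts hV hW (min'_mem _ _) (h ▸ min'_mem W _)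
  · intro i hi
    obtain ⟨x, hx⟩ := card_ne_zero.1 (mem_filter.1 hi).2
    exact ⟨P.part x, P.part_mem.2 (mem_univ x), Fin.ext (mem_filter.1 hx).2⟩
  · intro V hV
    simp only [Fin.val_castSucc, ofPartition_min' hV]

theorem sum_noncrossing_eq_sum_dominating (g : ℕ → R) :
    ∑ P : {P : Finpartition (univ : Finset (Fin n)) // IsNoncrossing P}, ∏ V ∈ P.1.parts, g #V =
      ∑ u ∈ (antidiagonalTuple (n + 1) n).filter IsDominating, tupleWeight g u := by
  have hsum {u} (hu : u ∈ (antidiagonalTuple (n + 1) n).filter IsDominating) : ∑ i, u i = n :=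
    mem_antidiagonalTuple.1 (mem_filter.1 hu).1
  have hpath {u} (hu : u ∈ (antidiagonalTuple (n + 1) n).filter IsDominating) :
      IsPath (periodize u) n :=
    (mem_filter.1 hu).2.isPath (hsum hu)
  refine sum_bij' (fun P _ i => ofPartition P.1 i)
    (fun u hu => ⟨toPartition (periodize u) n, (hpath hu).isNoncrossing_toPartition⟩)
    (fun P _ => mem_filter.2 ⟨mem_antidiagonalTuple.2 (sum_fin_ofPartition P.1),
      isDominating_ofPartition P.1⟩)
    (fun _ _ => mem_univ _) (fun P _ => Subtype.ext ?_) (fun u hu => funext fun i => ?_)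
    (fun P _ => (tupleWeight_ofPartition g P.1).symm)
  · exact (toPartition_congr fun k hk => periodize_natCast_apply _ (by omega)).trans
      (toPartition_ofPartition P.2)
  · rcases (Fin.le_last i).lt_or_eq with hi | rfl
    · have hi : (i : ℕ) < n := hi
      rw [(hpath hu).ofPartition_toPartition hi, periodize, Fin.cast_val_eq_self]
    · have hzero : periodize u n = 0 := by
        have := height_periodize_add_periodize (hsum hu)
        have := (hpath hu).height_eq_zero
        omega
      rw [Fin.val_last, ofPartition_eq_zero le_rfl]
      simpa [periodize] using hzero.symm

theorem sum_tupleWeight_eq_mul_sum_dominating (g : ℕ → R) :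
    ∑ u ∈ antidiagonalTuple (n + 1) n, tupleWeight g u =
      (n + 1) * ∑ u ∈ (antidiagonalTuple (n + 1) n).filter IsDominating, tupleWeight g u := by
  have hsplit (u) (hu : u ∈ antidiagonalTuple (n + 1) n) : tupleWeight g u =
      ∑ k ∈ range (n + 1), if IsDominating (rotate k u) then tupleWeight g u else 0 := by
    obtain ⟨K, ⟨hK, hdom⟩, huniq⟩ :=
      existsUnique_isDominating_rotate (mem_antidiagonalTuple.1 hu)
    rw [sum_eq_single_of_mem K (mem_range.2 hK) fun k hk hne =>
      if_neg fun h => hne (huniq k ⟨mem_range.1 hk, h⟩), if_pos hdom]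
  have hrotate (k : ℕ) : ∑ u ∈ antidiagonalTuple (n + 1) n,
      (if IsDominating (rotate k u) then tupleWeight g u else 0) =
        ∑ u ∈ (antidiagonalTuple (n + 1) n).filter IsDominating, tupleWeight g u := by
    rw [sum_filter]
    refine sum_nbij' (rotate k) (fun v => v ∘ (Equiv.addRight (k : Fin (n + 1))).symm)
      ?_ ?_ ?_ ?_ ?_
    · intro u hu
      simp only [mem_antidiagonalTuple] at hu ⊢
      exact (Equiv.sum_comp _ u).trans hu
    · intro v hv
      simp only [mem_antidiagonalTuple] at hv ⊢
      exact (Equiv.sum_comp _ v).trans hv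
    · intro u _
      ext i
      simp [rotate]
    · intro v _
      ext i
      simp [rotate]
    · intro u _
      rw [tupleWeight_rotate]
  rw [sum_congr rfl hsplit, sum_comm, sum_congr rfl fun k _ => hrotate k, sum_const, card_range,
    nsmul_eq_mul, Nat.cast_succ]

def compositionSum (g : ℕ → R) (j n : ℕ) : R :=
  ∑ a ∈ (antidiagonalTuple j n).filter (fun a => ∀ r, 1 ≤ a r), ∏ r, g (a r)

lemma compositionSum_eq_zero (g : ℕ → R) {j : ℕ} (hn : 1 ≤ n) (hj : j ∉ Icc 1 n) :
    compositionSum g j n = 0 := by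
  refine sum_eq_zero fun a ha => absurd ha ?_
  simp only [mem_filter, mem_antidiagonalTuple, not_and]
  intro hsum hpos
  have hjn : j ≤ n :=
    calc j = ∑ _r : Fin j, 1 := by simp
      _ ≤ ∑ r, a r := sum_le_sum fun r _ => hpos r
      _ = n := hsum
  rcases Nat.eq_zero_or_pos j with rfl | hj0
  · simp only [univ_eq_empty, sum_empty] at hsum
    omega
  · exact hj (mem_Icc.2 ⟨hj0, hjn⟩)

lemma sum_tupleWeight_filter_support (g : ℕ → R) {m : ℕ} (S : Finset (Fin m)) :
    ∑ u ∈ (antidiagonalTuple m n).filter (fun u => ({i | u i ≠ 0} : Finset (Fin m)) = S),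
      tupleWeight g u = compositionSum g #S n := by
  set e : Fin #S ≃ S := S.equivFin.symm
  have hsum (f : Fin m → ℕ) : ∑ i ∈ S, f i = ∑ r, f (e r) :=
    (sum_coe_sort S f).symm.trans (e.sum_comp fun i => f i).symm
  have hprod (f : Fin m → R) : ∏ i ∈ S, f i = ∏ r, f (e r) :=
    (prod_coe_sort S f).symm.trans (e.prod_comp fun i => f i).symm
  have hsupp {u : Fin m → ℕ} (hu : ({i | u i ≠ 0} : Finset (Fin m)) = S) {i : Fin m} :
      i ∈ S ↔ u i ≠ 0 := by
    rw [← hu]; simp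
  refine sum_nbij' (fun u r => u (e r)) (fun a i => if h : i ∈ S then a (e.symm ⟨i, h⟩) else 0)
    ?_ ?_ ?_ ?_ ?_
  · intro u hu
    simp only [mem_filter, mem_antidiagonalTuple] at hu ⊢
    refine ⟨?_, fun r => Nat.one_le_iff_ne_zero.2 ((hsupp hu.2).1 (e r).2)⟩
    rw [← hsum, sum_subset (subset_univ S) fun i _ hi => by simpa [hsupp hu.2] using hi, hu.1]
  · intro a ha
    simp only [mem_filter, mem_antidiagonalTuple] at ha ⊢
    refine ⟨?_, ?_⟩
    · rw [← sum_subset (subset_univ S) fun i _ hi => dif_neg hi, hsum]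
      simpa using ha.1
    · ext i
      by_cases hi : i ∈ S
      · simpa [hi] using Nat.one_le_iff_ne_zero.1 (ha.2 _)
      · simp [hi]
  · intro u hu
    simp only [mem_filter] at hu
    funext i
    by_cases hi : i ∈ S
    · simp [hi]
    · rw [dif_neg hi, eq_comm, ← not_ne_iff, ← hsupp hu.2]
      exact hi
  · intro a _
    funext r
    simp
  · intro u hu
    rw [tupleWeight, (mem_filter.1 hu).2, hprod]

theorem sum_tupleWeight_eq_sum_choose_mul (g : ℕ → R) (m : ℕ) :
    ∑ u ∈ antidiagonalTuple m n, tupleWeight g u =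
      ∑ j ∈ range (m + 1), m.choose j * compositionSum g j n := by
  rw [← sum_fiberwise_of_maps_to (g := fun u : Fin m → ℕ => ({i | u i ≠ 0} : Finset (Fin m)))
    (t := univ.powerset) (fun u _ => mem_powerset.2 (subset_univ _)),
    sum_congr rfl fun S _ => sum_tupleWeight_filter_support g S, sum_powerset, card_univ,
    Fintype.card_fin]
  refine sum_congr rfl fun j _ => ?_
  rw [sum_congr rfl fun S hS => by rw [(mem_powersetCard.1 hS).2], sum_const, card_powersetCard,
    card_univ, Fintype.card_fin, nsmul_eq_mul]

end Weights

theorem compositionSum_eq_sum_antitone {K : Type*} [Field K] [CharZero K] (g : ℕ → K) (j n : ℕ) :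
    compositionSum g j n =
      ∑ b ∈ (antidiagonalTuple j n).filter (fun b => Antitone b ∧ ∀ r, 1 ≤ b r),
        (j.factorial / fMult (univ.val.map b) : K) * ∏ r, g (b r) := by
  have hmaps : ∀ a ∈ (antidiagonalTuple j n).filter (fun a => ∀ r, 1 ≤ a r),
      antitoneSort a ∈ (antidiagonalTuple j n).filter (fun b => Antitone b ∧ ∀ r, 1 ≤ b r) := by
    intro a ha
    rw [mem_filter] at ha ⊢
    refine ⟨?_, antitone_antitoneSort a, forall_of_map_eq (map_antitoneSort a) ha.2⟩
    have := mem_antidiagonalTuple_of_map_eq (map_antitoneSort a)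
    rwa [sum_map_val, (mem_antidiagonalTuple.1 ha.1)] at this
  rw [compositionSum, ← sum_fiberwise_of_maps_to hmaps]
  refine sum_congr rfl fun b hb => ?_
  obtain ⟨hb, hanti, hbpos⟩ := mem_filter.1 hb
  have hbsum : (univ.val.map b).sum = n := by rw [sum_map_val, mem_antidiagonalTuple.1 hb]
  have hfibre : {a ∈ (antidiagonalTuple j n).filter (fun a => ∀ r, 1 ≤ a r) | antitoneSort a = b}
      = {a ∈ antidiagonalTuple j (univ.val.map b).sum | univ.val.map a = univ.val.map b} := by
    ext a
    simp only [mem_filter, hbsum]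
    constructor
    · rintro ⟨⟨ha, -⟩, rfl⟩
      exact ⟨ha, (map_antitoneSort a).symm⟩
    · rintro ⟨ha, hmap⟩
      exact ⟨⟨ha, forall_of_map_eq hmap hbpos⟩,
        eq_of_antitone_of_map_eq (antitone_antitoneSort a) hanti ((map_antitoneSort a).trans hmap)⟩
  have hcard := card_filter_map_eq_mul_fMult j (univ.val.map b) (by simp)
  rw [hfibre, sum_congr rfl fun a ha => prod_eq_prod_of_map_eq g (mem_filter.1 ha).2, sum_const,
    nsmul_eq_mul]
  congr 1
  rw [eq_div_iff (by simp [fMult_ne_zero])]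
  exact_mod_cast hcard

theorem succ_mul_sum_noncrossing {R : Type*} [CommSemiring R] (g : ℕ → R) (hn : 1 ≤ n) :
    (n + 1) * ∑ P : {P : Finpartition (univ : Finset (Fin n)) // IsNoncrossing P},
        ∏ V ∈ P.1.parts, g #V =
      ∑ j ∈ Icc 1 n, (n + 1).choose j * compositionSum g j n := by
  rw [sum_noncrossing_eq_sum_dominating, ← sum_tupleWeight_eq_mul_sum_dominating,
    sum_tupleWeight_eq_sum_choose_mul]
  refine (sum_subset (fun j hj => mem_range.2 (by simp at hj; omega)) fun j _ hj => ?_).symm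
  rw [compositionSum_eq_zero g hn hj, mul_zero]

end Lukasiewicz

/-- With free cumulants `c_n = W_n β^{n-1}`, the moment sequence defined by the free
moment–cumulant relation `m_n = Σ_{π ∈ NC(n)} ∏_{V ∈ π} c_{|V|}` equals
`m_n = Σ_{j=1}^n Σ_{b₁+⋯+b_j=n, b₁≥⋯≥b_j≥1} [n(n-1)⋯(n-j+2)/f(b)] ∏_r W_{b_r} β^{b_r-1}`. -/
theorem free_cumulant_moment_formula (β : ℝ) (W : ℕ → ℝ) (n : ℕ) (hn : 1 ≤ n) :
    (∑ᶠ P : {P : Finpartition (Finset.univ : Finset (Fin n)) // IsNoncrossing P},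
        ∏ V ∈ P.1.parts, W V.card * β ^ (V.card - 1)) =
      ∑ j ∈ Finset.Icc 1 n,
        ∑ b ∈ (Finset.Nat.antidiagonalTuple j n).filter
            (fun b => (∀ r s : Fin j, r ≤ s → b s ≤ b r) ∧ ∀ r, 1 ≤ b r),
          ((Nat.descFactorial n (j - 1) : ℝ) /
              (fMult (Multiset.map b Finset.univ.val) : ℝ)) *
            ∏ r, W (b r) * β ^ (b r - 1) := by
  refine mul_left_cancel₀ (Nat.cast_add_one_ne_zero n : (n : ℝ) + 1 ≠ 0) ?_
  rw [finsum_eq_sum_of_fintype,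
    Lukasiewicz.succ_mul_sum_noncrossing (fun k => W k * β ^ (k - 1)) hn, mul_sum]
  refine sum_congr rfl fun j hj => ?_
  rw [Lukasiewicz.compositionSum_eq_sum_antitone, mul_sum, mul_sum]
  refine sum_congr rfl fun b _ => ?_
  have hchoose : ((n + 1).choose j : ℝ) * j.factorial = (n + 1) * n.descFactorial (j - 1) := by
    exact_mod_cast Nat.choose_succ_mul_factorial n (mem_Icc.1 hj).1
  rw [← mul_assoc, mul_div_assoc', hchoose]
  ring
end
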